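/- arXiv:math/0205164 — 6 statements merged into one kernel-verified Lean document; each statement's English description precedes it below -/
import Mathlib

section
/- Let w_1, ..., w_n be positive reals summing to 1. Then the function π on the symmetric group S_n defined by π(z) = ∏_{r=1}^n w_{z_r} / (∑_{j=r}^n w_{z_j}) is a probability mass function, i.e., ∑_{z ∈ S_n} π(z) = 1. -/
/-!
Sampling without replacement: the factor for `r = 0` is the probability `w p / ∑ i, w i` of
drawing `p = z 0` first, and the remaining factors are the same product for the induced
permutation of the other `n` items with their weights. Summing over that permutation first gives
`1` by induction on `n`, and then the first draws sum to `1`.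
-/

open Finset Equiv

noncomputable def samplingProb {n : ℕ} (w : Fin n → ℝ) (z : Perm (Fin n)) : ℝ :=
  ∏ r : Fin n, w (z r) / ∑ j ∈ univ.filter (fun j => r ≤ j), w (z j)

lemma Fin.filter_succ_le_eq_map {n : ℕ} (r : Fin n) :
    univ.filter (fun j : Fin (n + 1) => r.succ ≤ j) =
      (univ.filter (fun j : Fin n => r ≤ j)).map (Fin.succEmb n) := by
  ext j
  induction j using Fin.cases with
  | zero => simp [Fin.succ_ne_zero]
  | succ k => simp [Fin.succ_le_succ_iff]

lemma samplingProb_decomposeFin_symm {n : ℕ} (w : Fin (n + 1) → ℝ) (p : Fin (n + 1))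
    (σ : Perm (Fin n)) :
    samplingProb w (Perm.decomposeFin.symm (p, σ)) =
      w p / (∑ i, w i) * samplingProb (fun k => w (swap 0 p k.succ)) σ := by
  rw [samplingProb, Fin.prod_univ_succ]
  congr 1
  · simp only [Fin.zero_le, filter_true, Equiv.sum_comp, Perm.decomposeFin_symm_apply_zero]
  · refine prod_congr rfl fun r _ => ?_
    simp only [Fin.filter_succ_le_eq_map, sum_map, Fin.coe_succEmb,
      Perm.decomposeFin_symm_apply_succ]

theorem sum_samplingProb {n : ℕ} (w : Fin n → ℝ) (hw : ∀ i, 0 < w i) :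
    ∑ z, samplingProb w z = 1 := by
  induction n with
  | zero => simp [samplingProb]
  | succ n ih =>
    have hpos : 0 < ∑ i, w i := sum_pos (fun i _ => hw i) univ_nonempty
    calc ∑ z, samplingProb w z
        = ∑ p, ∑ σ, samplingProb w (Perm.decomposeFin.symm (p, σ)) := by
          rw [← Equiv.sum_comp Perm.decomposeFin.symm, Fintype.sum_prod_type]
      _ = ∑ p, w p / ∑ i, w i := by
          refine sum_congr rfl fun p _ => ?_
          simp only [samplingProb_decomposeFin_symm, ← mul_sum, ih _ fun k => hw _, mul_one]
      _ = 1 := by rw [← sum_div, div_self hpos.ne']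

theorem mtf_stationary_sums_to_one_general (n : ℕ) (w : Fin n → ℝ)
    (hw : ∀ i, 0 < w i) :
    ∑ z : Equiv.Perm (Fin n),
      ∏ r : Fin n, w (z r) / (∑ j ∈ Finset.univ.filter (fun j => r ≤ j), w (z j)) = 1 :=
  sum_samplingProb w hw

/-- The move-to-front stationary distribution
`π(z) = ∏_{r=1}^n w_{z_r} / (∑_{j=r}^n w_{z_j})` is a probability mass function. -/
theorem mtf_stationary_sums_to_one (n : ℕ) (w : Fin n → ℝ)
    (hw : ∀ i, 0 < w i) (hsum : ∑ i, w i = 1) :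
    ∑ z : Equiv.Perm (Fin n),
      ∏ r : Fin n, w (z r) / (∑ j ∈ Finset.univ.filter (fun j => r ≤ j), w (z j)) = 1 :=
  mtf_stationary_sums_to_one_general n w hw
end

section
/- For Zipf weights w_i = 1/(i·H_n) with H_n = ∑_{k=1}^n 1/k, the quantity E[T] = H_n · ∑_{r=2}^n 1/H_r satisfies n − 1 ≤ E[T] ≤ n + O(n/ln n); in particular E[T]/n → 1 as n → ∞. -/
/-!
Writing `H n / H r = 1 + (H n - H r) / H r` gives the lower bound `n - 1` at once. For the
upper bound, split the excess terms at `r = √n`. The at most `√n` small indices contribute at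
most `log n` each, and `√n log n = O(n / log n)` because `(log n)² = O(√n)`. For `r ≥ √n` we
have `H r ≥ log r ≥ (log n) / 2`, and `∑_{r ≤ n} (H n - H r) = n`, so these terms contribute
at most `2 n / log n`.
-/

open Finset Real Filter Topology

lemma sum_Icc_one_div_eq_harmonic (n : ℕ) : ∑ k ∈ Icc 1 n, (1 : ℝ) / k = harmonic n := by
  simp [harmonic_eq_sum_Icc, one_div]

lemma harmonic_monotone : Monotone harmonic :=
  monotone_nat_of_le_succ fun n ↦ by
    rw [harmonic_succ]; exact le_add_of_nonneg_right (by positivity)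

lemma one_le_harmonic {n : ℕ} (hn : n ≠ 0) : 1 ≤ harmonic n := by
  simpa using harmonic_monotone (Nat.one_le_iff_ne_zero.mpr hn)

lemma harmonic_sub_harmonic_nonneg {r n : ℕ} (h : r ≤ n) : 0 ≤ (harmonic n : ℝ) - harmonic r :=
  sub_nonneg.2 (by exact_mod_cast harmonic_monotone h)

lemma log_le_harmonic (n : ℕ) : log n ≤ harmonic n := by
  simpa using log_le_harmonic_floor n n.cast_nonneg

lemma log_le_two_mul_harmonic {n r : ℕ} (h : n ≤ r * r) : log n ≤ 2 * harmonic r := by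
  rcases Nat.eq_zero_or_pos n with rfl | hn
  · simpa using harmonic_monotone r.zero_le
  have hr : (r : ℝ) ≠ 0 := by rintro h; simp_all
  calc log n ≤ log ((r : ℝ) * r) := log_le_log (by positivity) (by exact_mod_cast h)
    _ = 2 * log r := by rw [log_mul hr hr]; ring
    _ ≤ 2 * harmonic r := by gcongr; exact log_le_harmonic r

/-- Double counting: each `1 / k` with `k ≤ n` occurs in the `k` terms with `r < k`. -/
lemma sum_range_harmonic_sub (n : ℕ) : ∑ r ∈ range (n + 1), (harmonic n - harmonic r) = n := by
  induction n with
  | zero => simp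
  | succ n ih =>
    rw [sum_range_succ, sub_self, add_zero, harmonic_succ]
    simp_rw [add_sub_right_comm]
    rw [sum_add_distrib, ih, sum_const, card_range, nsmul_eq_mul]
    push_cast
    field_simp

lemma sum_Icc_two_harmonic_sub_le (n : ℕ) :
    ∑ r ∈ Icc 2 n, ((harmonic n : ℝ) - harmonic r) ≤ n := by
  have h := congrArg (Rat.cast (K := ℝ)) (sum_range_harmonic_sub n)
  push_cast at h
  rw [← h]
  refine sum_le_sum_of_subset_of_nonneg (fun r hr ↦ ?_) fun r hr _ ↦ ?_
  · simp only [mem_Icc, mem_range] at hr ⊢; omega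
  · exact harmonic_sub_harmonic_nonneg (mem_range_succ_iff.1 hr)

lemma sqrt_mul_log_le {x : ℝ} (hx : 1 < x) : √x * log x ≤ 16 * (x / log x) := by
  have hx0 : 0 ≤ x := by linarith
  have hlog : 0 < log x := log_pos hx
  have h := log_le_rpow_div hx0 (by norm_num : (0 : ℝ) < 1 / 4)
  have hsq : log x ^ 2 ≤ 16 * √x :=
    calc log x ^ 2 ≤ (x ^ (1 / 4 : ℝ) / (1 / 4)) ^ 2 := by gcongr
      _ = 16 * √x := by
        rw [sqrt_eq_rpow, div_pow, ← rpow_natCast, ← rpow_mul hx0]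
        norm_num
        ring
  rw [mul_div_assoc', le_div_iff₀ hlog]
  calc √x * log x * log x = √x * log x ^ 2 := by ring
    _ ≤ √x * (16 * √x) := by gcongr
    _ = 16 * x := by rw [mul_left_comm, mul_self_sqrt hx0]

section ExcessSum

variable {n : ℕ}

lemma sum_filter_mul_self_lt_harmonic_sub_div_le :
    ∑ r ∈ (Icc 2 n).filter (fun r ↦ r * r < n), ((harmonic n : ℝ) - harmonic r) / harmonic r ≤
      √n * log n := by
  have hcard : (#((Icc 2 n).filter (fun r ↦ r * r < n)) : ℝ) ≤ √n := by
    refine le_trans ?_ Real.nat_sqrt_le_real_sqrt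
    have hsub : (Icc 2 n).filter (fun r ↦ r * r < n) ⊆ Icc 1 (Nat.sqrt n) := fun r hr ↦ by
      simp only [mem_filter, mem_Icc] at hr ⊢
      exact ⟨by omega, Nat.le_sqrt.2 hr.2.le⟩
    exact_mod_cast (card_le_card hsub).trans (by simp)
  have hterm : ∀ r ∈ (Icc 2 n).filter (fun r ↦ r * r < n),
      ((harmonic n : ℝ) - harmonic r) / harmonic r ≤ log n := fun r hr ↦ by
    simp only [mem_filter, mem_Icc] at hr
    have hHr : (1 : ℝ) ≤ harmonic r := by exact_mod_cast one_le_harmonic (by omega)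
    calc ((harmonic n : ℝ) - harmonic r) / harmonic r ≤ harmonic n - harmonic r :=
          div_le_self (harmonic_sub_harmonic_nonneg hr.1.2) hHr
      _ ≤ log n := by linarith [harmonic_le_one_add_log n]
  calc _ ≤ ∑ _r ∈ (Icc 2 n).filter (fun r ↦ r * r < n), log n := sum_le_sum hterm
    _ = #((Icc 2 n).filter (fun r ↦ r * r < n)) * log n := by rw [sum_const, nsmul_eq_mul]
    _ ≤ √n * log n := by gcongr

lemma sum_filter_le_mul_self_harmonic_sub_div_le (hn : 2 ≤ n) :
    ∑ r ∈ (Icc 2 n).filter (fun r ↦ n ≤ r * r), ((harmonic n : ℝ) - harmonic r) / harmonic r ≤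
      2 * (n / log n) := by
  have hlog : 0 < log n / 2 := by
    have : (1 : ℝ) < n := by exact_mod_cast hn
    linarith [log_pos this]
  have hnum : ∀ r ∈ Icc 2 n, 0 ≤ (harmonic n : ℝ) - harmonic r := fun r hr ↦
    harmonic_sub_harmonic_nonneg (mem_Icc.1 hr).2
  calc _ ≤ ∑ r ∈ (Icc 2 n).filter (fun r ↦ n ≤ r * r),
          ((harmonic n : ℝ) - harmonic r) / (log n / 2) := by
        refine sum_le_sum fun r hr ↦ ?_
        rw [mem_filter] at hr
        refine div_le_div_of_nonneg_left (hnum r hr.1) hlog ?_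
        linarith [log_le_two_mul_harmonic hr.2]
    _ ≤ ∑ r ∈ Icc 2 n, ((harmonic n : ℝ) - harmonic r) / (log n / 2) :=
        sum_le_sum_of_subset_of_nonneg (filter_subset _ _) fun r hr _ ↦
          div_nonneg (hnum r hr) hlog.le
    _ = (∑ r ∈ Icc 2 n, ((harmonic n : ℝ) - harmonic r)) / (log n / 2) := (sum_div ..).symm
    _ ≤ n / (log n / 2) := by gcongr; exact sum_Icc_two_harmonic_sub_le n
    _ = 2 * (n / log n) := by ring

lemma sum_harmonic_sub_div_le (hn : 2 ≤ n) :
    ∑ r ∈ Icc 2 n, ((harmonic n : ℝ) - harmonic r) / harmonic r ≤ 18 * (n / log n) := by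
  rw [← sum_filter_add_sum_filter_not _ (fun r ↦ r * r < n)]
  simp only [not_lt]
  have hsmall := (sum_filter_mul_self_lt_harmonic_sub_div_le (n := n)).trans
    (sqrt_mul_log_le (by exact_mod_cast hn))
  linarith [sum_filter_le_mul_self_harmonic_sub_div_le hn]

end ExcessSum

noncomputable def zipfExpectedTime (n : ℕ) : ℝ := ∑ r ∈ Icc 2 n, (harmonic n : ℝ) / harmonic r

lemma zipfExpectedTime_eq_sum_one_div (n : ℕ) :
    zipfExpectedTime n = (∑ k ∈ Icc 1 n, (1 : ℝ) / k) *
      ∑ r ∈ Icc 2 n, 1 / (∑ k ∈ Icc 1 r, (1 : ℝ) / k) := by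
  simp_rw [sum_Icc_one_div_eq_harmonic, mul_sum, mul_one_div]
  rfl

lemma zipfExpectedTime_eq {n : ℕ} (hn : 1 ≤ n) :
    zipfExpectedTime n = (n - 1) + ∑ r ∈ Icc 2 n, ((harmonic n : ℝ) - harmonic r) / harmonic r := by
  have hcard : (#(Icc 2 n) : ℝ) = n - 1 := by
    rw [Nat.card_Icc, Nat.cast_sub (by omega)]; push_cast; ring
  calc zipfExpectedTime n
      = ∑ r ∈ Icc 2 n, (1 + ((harmonic n : ℝ) - harmonic r) / harmonic r) := by
        refine sum_congr rfl fun r hr ↦ ?_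
        have : (harmonic r : ℝ) ≠ 0 := by
          exact_mod_cast (harmonic_pos (by grind)).ne'
        rw [sub_div, div_self this, add_sub_cancel]
    _ = _ := by rw [sum_add_distrib, sum_const, nsmul_one, hcard]

lemma sub_one_le_zipfExpectedTime {n : ℕ} (hn : 1 ≤ n) : (n : ℝ) - 1 ≤ zipfExpectedTime n := by
  rw [zipfExpectedTime_eq hn, le_add_iff_nonneg_right]
  exact sum_nonneg fun r hr ↦ div_nonneg (harmonic_sub_harmonic_nonneg (mem_Icc.1 hr).2)
    (by exact_mod_cast (harmonic_pos (by grind)).le)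

lemma zipfExpectedTime_le {n : ℕ} (hn : 2 ≤ n) :
    zipfExpectedTime n ≤ n + 18 * (n / log n) := by
  rw [zipfExpectedTime_eq (by omega)]
  linarith [sum_harmonic_sub_div_le hn]

lemma tendsto_div_self_of_sub_one_le_of_le {f : ℕ → ℝ} {C : ℝ}
    (hlow : ∀ᶠ n : ℕ in atTop, (n : ℝ) - 1 ≤ f n)
    (hup : ∀ᶠ n : ℕ in atTop, f n ≤ n + C * (n / log n)) :
    Tendsto (fun n ↦ f n / n) atTop (𝓝 1) := by
  have hlog : Tendsto (fun n : ℕ ↦ (log n)⁻¹) atTop (𝓝 0) :=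
    tendsto_inv_atTop_zero.comp (tendsto_log_atTop.comp tendsto_natCast_atTop_atTop)
  have hlow' : Tendsto (fun n : ℕ ↦ ((n : ℝ) - 1) / n) atTop (𝓝 1) := by
    have := tendsto_const_nhds (x := (1 : ℝ)).sub (tendsto_one_div_atTop_nhds_zero_nat (𝕜 := ℝ))
    refine (by simpa using this : Tendsto _ _ _).congr' ?_
    filter_upwards [eventually_gt_atTop 0] with n hn
    field_simp
  have hup' : Tendsto (fun n : ℕ ↦ ((n : ℝ) + C * (n / log n)) / n) atTop (𝓝 1) := by
    have := tendsto_const_nhds (x := (1 : ℝ)).add (tendsto_const_nhds (x := C).mul hlog)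
    refine (by simpa using this : Tendsto _ _ _).congr' ?_
    filter_upwards [eventually_gt_atTop 0] with n hn
    field_simp
  refine tendsto_of_tendsto_of_tendsto_of_le_of_le' hlow' hup' ?_ ?_
  · filter_upwards [hlow] with n h using div_le_div_of_nonneg_right h n.cast_nonneg
  · filter_upwards [hup] with n h using div_le_div_of_nonneg_right h n.cast_nonneg

/-- For Zipf weights `w_i = 1/(i·H_n)`, the quantity `E[T] = H_n · ∑_{r=2}^n 1/H_r`
satisfies `n − 1 ≤ E[T] ≤ n + O(n/ln n)`; in particular `E[T]/n → 1`. -/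
theorem zipf_expected_T :
    (∀ n : ℕ, 1 ≤ n →
      (n : ℝ) - 1 ≤ (∑ k ∈ Finset.Icc 1 n, (1 : ℝ) / k) *
        ∑ r ∈ Finset.Icc 2 n, 1 / (∑ k ∈ Finset.Icc 1 r, (1 : ℝ) / k)) ∧
    (∃ C : ℝ, 0 < C ∧ ∀ n : ℕ, 2 ≤ n →
      (∑ k ∈ Finset.Icc 1 n, (1 : ℝ) / k) *
        (∑ r ∈ Finset.Icc 2 n, 1 / (∑ k ∈ Finset.Icc 1 r, (1 : ℝ) / k))
        ≤ n + C * ((n : ℝ) / Real.log n)) ∧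
    Filter.Tendsto
      (fun n : ℕ =>
        ((∑ k ∈ Finset.Icc 1 n, (1 : ℝ) / k) *
          ∑ r ∈ Finset.Icc 2 n, 1 / (∑ k ∈ Finset.Icc 1 r, (1 : ℝ) / k)) / n)
      Filter.atTop (nhds 1) := by
  simp_rw [← zipfExpectedTime_eq_sum_one_div]
  have hlow : ∀ n : ℕ, 1 ≤ n → (n : ℝ) - 1 ≤ zipfExpectedTime n :=
    fun _ ↦ sub_one_le_zipfExpectedTime
  have hup : ∀ n : ℕ, 2 ≤ n → zipfExpectedTime n ≤ n + 18 * (n / log n) :=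
    fun _ ↦ zipfExpectedTime_le
  exact ⟨hlow, ⟨18, by norm_num, hup⟩, tendsto_div_self_of_sub_one_le_of_le
    (eventually_atTop.2 ⟨1, hlow⟩) (eventually_atTop.2 ⟨2, hup⟩)⟩
end

section
/- For generalized Zipf weights with 0 < α < 1, i.e., w_i = i^{−α}/H_n^{(α)} with H_n^{(α)} = ∑_{i=1}^n i^{−α}, the quantity E[T] = H_n^{(α)} ∑_{r=2}^n 1/H_r^{(α)} satisfies E[T] = n/α + o(n) as n → ∞. -/
open Filter Finset Asymptotics Topology

/-!
Comparing with `∫ x^{-α} dx` gives `H_n^{(α)} = n^{1-α}/(1-α) + O(1)`, hence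
`1/H_r^{(α)} ~ (1-α) r^{α-1}`. Asymptotic equivalence passes to partial sums of a divergent
nonnegative series, so a second integral comparison gives
`∑_{r=2}^n 1/H_r^{(α)} ~ (1-α) n^α/α`, and the product of the two equivalents is `n/α`.
-/

theorem Finset.sum_Icc_one_eq_sum_range {M : Type*} [AddCommMonoid M] (f : ℕ → M) (n : ℕ) :
    ∑ i ∈ Icc 1 n, f i = ∑ i ∈ range n, f (i + 1) := by
  rw [range_eq_Ico, sum_Ico_add' f 0 n 1]
  rfl

theorem AntitoneOn.integral_add_le_sum_Icc {f : ℝ → ℝ} {n : ℕ} (hn : 1 ≤ n)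
    (hf : AntitoneOn f (Set.Icc 1 n)) :
    (∫ x in (1 : ℝ)..n, f x) + f n ≤ ∑ i ∈ Icc 1 n, f i := by
  rw [← sum_Ico_add_eq_sum_Icc hn]
  gcongr
  have hf' : AntitoneOn f (Set.Icc ((1 : ℕ) : ℝ) n) := by rwa [Nat.cast_one]
  have := hf'.integral_le_sum_Ico hn
  rwa [Nat.cast_one] at this

theorem AntitoneOn.sum_Icc_le_add_integral {f : ℝ → ℝ} {n : ℕ} (hn : 1 ≤ n)
    (hf : AntitoneOn f (Set.Icc 1 n)) :
    ∑ i ∈ Icc 1 n, f i ≤ f 1 + ∫ x in (1 : ℝ)..n, f x := by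
  rw [← Ico_add_one_right_eq_Icc, sum_eq_sum_Ico_succ_bot (by omega), ← sum_Ico_add']
  have hf' : AntitoneOn f (Set.Icc ((1 : ℕ) : ℝ) n) := by rwa [Nat.cast_one]
  have := hf'.sum_le_integral_Ico hn
  rw [Nat.cast_one] at this
  exact_mod_cast add_le_add_right this (f 1)

theorem sum_Icc_rpow_sub_isBigO_one {q : ℝ} (hq : -1 < q) (hq0 : q ≤ 0) :
    (fun n : ℕ => ∑ i ∈ Icc 1 n, (i : ℝ) ^ q - (n : ℝ) ^ (q + 1) / (q + 1))
      =O[atTop] fun _ => (1 : ℝ) := by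
  have hp : 0 < q + 1 := by linarith
  refine IsBigO.of_bound (1 + 1 / (q + 1)) ?_
  filter_upwards [eventually_ge_atTop 1] with n hn
  have hanti : AntitoneOn (fun x : ℝ => x ^ q) (Set.Icc 1 n) := fun x hx y _ hxy =>
    Real.rpow_le_rpow_of_nonpos (by linarith [hx.1]) hxy hq0
  have hint : ∫ x in (1 : ℝ)..n, x ^ q = ((n : ℝ) ^ (q + 1) - 1) / (q + 1) := by
    simp [integral_rpow (Or.inl hq)]
  have hlow := hanti.integral_add_le_sum_Icc hn
  have hupp := hanti.sum_Icc_le_add_integral hn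
  simp only [hint, Real.one_rpow] at hlow hupp
  have hnq : 0 ≤ (n : ℝ) ^ q := by positivity
  rw [sub_div] at hlow hupp
  rw [norm_one, mul_one, Real.norm_eq_abs, abs_le]
  have : 0 < 1 / (q + 1) := by positivity
  constructor <;> linarith

theorem sum_Icc_rpow_isEquivalent {q : ℝ} (hq : -1 < q) (hq0 : q ≤ 0) :
    (fun n : ℕ => ∑ i ∈ Icc 1 n, (i : ℝ) ^ q) ~[atTop]
      fun n => (n : ℝ) ^ (q + 1) / (q + 1) := by
  have hp : 0 < q + 1 := by linarith
  have htop : Tendsto (fun n : ℕ => (n : ℝ) ^ (q + 1) / (q + 1)) atTop atTop :=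
    ((tendsto_rpow_atTop hp).comp tendsto_natCast_atTop_atTop).atTop_div_const hp
  refine IsLittleO.isEquivalent ((sum_Icc_rpow_sub_isBigO_one hq hq0).trans_isLittleO ?_)
  rw [isLittleO_one_left_iff]
  exact tendsto_norm_atTop_atTop.comp htop

theorem Asymptotics.IsEquivalent.sum_range {u v : ℕ → ℝ} (huv : u ~[atTop] v) (hv : 0 ≤ v)
    (hv_sum : Tendsto (fun n => ∑ i ∈ range n, v i) atTop atTop) :
    (fun n => ∑ i ∈ range n, u i) ~[atTop] fun n => ∑ i ∈ range n, v i := by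
  have := huv.isLittleO.sum_range hv hv_sum
  simp only [Pi.sub_apply, sum_sub_distrib] at this
  exact this

theorem Asymptotics.IsEquivalent.sum_Icc_one {u v : ℕ → ℝ} (huv : u ~[atTop] v) (hv : 0 ≤ v)
    (hv_sum : Tendsto (fun n => ∑ i ∈ Icc 1 n, v i) atTop atTop) :
    (fun n => ∑ i ∈ Icc 1 n, u i) ~[atTop] fun n => ∑ i ∈ Icc 1 n, v i := by
  simp only [sum_Icc_one_eq_sum_range] at hv_sum ⊢
  exact (huv.comp_tendsto (tendsto_add_atTop_nat 1)).sum_range (fun i => hv (i + 1)) hv_sum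

/-- The generalized harmonic number `H_n^{(α)}`. -/
noncomputable def genHarmonic (α : ℝ) (n : ℕ) : ℝ := ∑ i ∈ Icc 1 n, (i : ℝ) ^ (-α)

theorem genHarmonic_one (α : ℝ) : genHarmonic α 1 = 1 := by
  simp [genHarmonic]

section

variable {α : ℝ}

theorem genHarmonic_isEquivalent (hα0 : 0 ≤ α) (hα1 : α < 1) :
    genHarmonic α ~[atTop] fun n => (n : ℝ) ^ (1 - α) / (1 - α) := by
  have := sum_Icc_rpow_isEquivalent (q := -α) (by linarith) (by linarith)
  rwa [neg_add_eq_sub] at this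

theorem one_div_genHarmonic_isEquivalent (hα0 : 0 ≤ α) (hα1 : α < 1) :
    (fun n => 1 / genHarmonic α n) ~[atTop] fun n => (1 - α) * (n : ℝ) ^ (α - 1) := by
  refine (genHarmonic_isEquivalent hα0 hα1).inv.congr_left (.of_eq ?_) |>.congr_right (.of_eq ?_)
  · simp [Pi.inv_def, one_div]
  · funext n
    rw [Pi.inv_apply, inv_div, div_eq_mul_inv, ← Real.rpow_neg (Nat.cast_nonneg n), neg_sub]

theorem sum_one_div_genHarmonic_isEquivalent (hα0 : 0 < α) (hα1 : α < 1) :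
    (fun n : ℕ => ∑ r ∈ Icc 2 n, 1 / genHarmonic α r) ~[atTop]
      fun n => (1 - α) / α * (n : ℝ) ^ α := by
  have htop : Tendsto (fun n : ℕ => (1 - α) / α * (n : ℝ) ^ α) atTop atTop :=
    ((tendsto_rpow_atTop hα0).comp tendsto_natCast_atTop_atTop).const_mul_atTop
      (div_pos (by linarith) hα0)
  have hpow : (fun n : ℕ => ∑ r ∈ Icc 1 n, (1 - α) * (r : ℝ) ^ (α - 1)) ~[atTop]
      fun n => (1 - α) / α * (n : ℝ) ^ α := by
    refine ((IsEquivalent.refl (u := fun _ : ℕ => 1 - α)).mul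
      (sum_Icc_rpow_isEquivalent (q := α - 1) (by linarith) (by linarith))).congr_left
      (.of_eq ?_) |>.congr_right (.of_eq ?_)
    · funext n
      simp only [Pi.mul_apply, mul_sum]
    · funext n
      simp only [Pi.mul_apply, sub_add_cancel]
      ring
  have hsum₁ : (fun n : ℕ => ∑ r ∈ Icc 1 n, 1 / genHarmonic α r) ~[atTop]
      fun n => (1 - α) / α * (n : ℝ) ^ α :=
    ((one_div_genHarmonic_isEquivalent hα0.le hα1).sum_Icc_one
      (fun r => by positivity) (hpow.symm.tendsto_atTop htop)).trans hpow
  have hone : (fun _ => (1 : ℝ)) =o[atTop] fun n : ℕ => (1 - α) / α * (n : ℝ) ^ α :=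
    (isLittleO_one_left_iff ℝ).2 (tendsto_norm_atTop_atTop.comp htop)
  refine (hsum₁.sub_isLittleO hone).congr_left ?_
  filter_upwards [eventually_ge_atTop 1] with n hn
  rw [Pi.sub_apply, ← Ico_add_one_right_eq_Icc, sum_eq_sum_Ico_succ_bot (by omega),
    Ico_add_one_right_eq_Icc, genHarmonic_one, div_one, add_sub_cancel_left]

end

/-- For generalized Zipf weights with `0 < α < 1`, `E[T] = H_n^{(α)} ∑_{r=2}^n 1/H_r^{(α)}`
satisfies `E[T] = n/α + o(n)`, i.e. `E[T]/n → 1/α`. -/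
theorem gzl_alpha_lt_one_expected_T (α : ℝ) (hα0 : 0 < α) (hα1 : α < 1) :
    Filter.Tendsto
      (fun n : ℕ =>
        ((∑ i ∈ Finset.Icc 1 n, (i : ℝ) ^ (-α)) *
          ∑ r ∈ Finset.Icc 2 n, 1 / (∑ i ∈ Finset.Icc 1 r, (i : ℝ) ^ (-α))) / n)
      Filter.atTop (nhds (1 / α)) := by
  have hprod := ((genHarmonic_isEquivalent hα0.le hα1).mul
    (sum_one_div_genHarmonic_isEquivalent hα0 hα1)).div
    (IsEquivalent.refl (u := fun n : ℕ => (n : ℝ)))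
  refine (hprod.congr_right ?_).symm.tendsto_nhds tendsto_const_nhds
  filter_upwards [eventually_gt_atTop 0] with n hn
  have hn' : (0 : ℝ) < n := Nat.cast_pos.2 hn
  have h1α : 1 - α ≠ 0 := by linarith
  rw [Pi.div_apply, Pi.mul_apply]
  calc (n : ℝ) ^ (1 - α) / (1 - α) * ((1 - α) / α * (n : ℝ) ^ α) / n
      = (n : ℝ) ^ (1 - α + α) / (α * n) := by rw [Real.rpow_add hn']; field_simp
    _ = 1 / α := by rw [sub_add_cancel, Real.rpow_one]; field_simp
end

section
/- For s > 0 fixed and power-law weights w_i = (n−i+1)^s / f(n,s) with f(n,s) = ∑_{j=1}^n j^s, the quantity E[T] = ∑_{r=2}^n f(n,s)/((n−r+1)^s + ... + n^s) satisfies E[T] = n ln n/(s+1) + O(n) as n → ∞. -/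
/-!
Compare power sums with integrals: `(n^(s+1) - m^(s+1))/(s+1) ≤ ∑_{m<j≤n} j^s`, and
`f(n,s) = ∑_{j≤n} j^s` lies between `n^(s+1)/(s+1)` and `n^(s+1)/(s+1) + n^s`.
With the trivial bound `r n^s` for the denominator, the `r`-th term is at least `n/((s+1) r)`.
Convexity of `x ↦ x^(s+1)` gives `n^(s+1)/(n^(s+1) - m^(s+1)) ≤ n/((s+1)(n-m)) + 1`, so the
term is at most `n/((s+1) r) + s + 3`. Summing over `r` gives `(n/(s+1)) (H_n - 1) + O(n)`,
and `H_n = ln n + O(1)`.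
-/

open Finset Real

variable {s : ℝ}

theorem sum_Ico_rpow_le {m n : ℕ} (hs : 0 ≤ s) (hmn : m ≤ n) :
    ∑ j ∈ Ico m n, (j : ℝ) ^ s ≤ ((n : ℝ) ^ (s + 1) - (m : ℝ) ^ (s + 1)) / (s + 1) := by
  have hmono : MonotoneOn (fun x : ℝ => x ^ s) (Set.Icc (m : ℝ) n) :=
    (monotoneOn_rpow_Ici_of_exponent_nonneg hs).mono fun _ hx => (Nat.cast_nonneg m).trans hx.1
  rw [← integral_rpow (Or.inl (by linarith))]
  exact hmono.sum_le_integral_Ico hmn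

theorem rpow_sub_rpow_le_sum_Icc {m n : ℕ} (hs : 0 ≤ s) (hmn : m ≤ n) :
    ((n : ℝ) ^ (s + 1) - (m : ℝ) ^ (s + 1)) / (s + 1) ≤
      ∑ j ∈ Icc (m + 1) n, (j : ℝ) ^ s := by
  have hmono : MonotoneOn (fun x : ℝ => x ^ s) (Set.Icc (m : ℝ) n) :=
    (monotoneOn_rpow_Ici_of_exponent_nonneg hs).mono fun _ hx => (Nat.cast_nonneg m).trans hx.1
  rw [← integral_rpow (Or.inl (by linarith)), ← Ico_add_one_right_eq_Icc,
    ← sum_Ico_add' (fun j : ℕ => (j : ℝ) ^ s)]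
  exact hmono.integral_le_sum_Ico hmn

theorem sum_Icc_one_rpow_le (hs : 0 ≤ s) (n : ℕ) :
    ∑ j ∈ Icc 1 n, (j : ℝ) ^ s ≤ (n : ℝ) ^ (s + 1) / (s + 1) + (n : ℝ) ^ s := by
  calc ∑ j ∈ Icc 1 n, (j : ℝ) ^ s ≤ ∑ j ∈ range (n + 1), (j : ℝ) ^ s :=
        sum_le_sum_of_subset_of_nonneg (fun j hj => by simp at hj ⊢; omega)
          (fun j _ _ => by positivity)
    _ = ∑ j ∈ Ico 0 n, (j : ℝ) ^ s + (n : ℝ) ^ s := by rw [sum_range_succ, range_eq_Ico]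
    _ ≤ _ := by
        gcongr
        simpa [zero_rpow (by linarith : s + 1 ≠ 0)] using sum_Ico_rpow_le hs (Nat.zero_le n)

theorem sum_Icc_rpow_le_card_mul {m n : ℕ} (hs : 0 ≤ s) :
    ∑ j ∈ Icc (m + 1) n, (j : ℝ) ^ s ≤ (n - m : ℕ) * (n : ℝ) ^ s := by
  calc ∑ j ∈ Icc (m + 1) n, (j : ℝ) ^ s ≤ ∑ _j ∈ Icc (m + 1) n, (n : ℝ) ^ s :=
        sum_le_sum fun j hj => rpow_le_rpow (Nat.cast_nonneg j)
          (Nat.cast_le.2 (mem_Icc.1 hj).2) hs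
    _ = _ := by rw [sum_const, Nat.card_Icc, nsmul_eq_mul]; congr 2; omega

theorem add_one_mul_mul_rpow_le {x y : ℝ} (hs : 0 ≤ s) (hx : 0 ≤ x) (hy : 0 ≤ y) :
    (s + 1) * (y * x ^ s) ≤ y ^ (s + 1) + s * x ^ (s + 1) := by
  have ha : 0 < s + 1 := by linarith
  have h := geom_mean_le_arith_mean2_weighted (w₁ := 1 / (s + 1)) (w₂ := s / (s + 1))
    (p₁ := y ^ (s + 1)) (p₂ := x ^ (s + 1)) (by positivity) (by positivity) (by positivity)
    (by positivity) (by field_simp; ring)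
  rw [← rpow_mul hy, ← rpow_mul hx, mul_one_div_cancel ha.ne', mul_div_cancel₀ _ ha.ne',
    rpow_one] at h
  calc (s + 1) * (y * x ^ s)
      ≤ (s + 1) * (1 / (s + 1) * y ^ (s + 1) + s / (s + 1) * x ^ (s + 1)) := by gcongr
    _ = _ := by field_simp

theorem rpow_div_rpow_sub_rpow_le {m n : ℝ} (hs : 0 ≤ s) (hm : 0 ≤ m) (hmn : m < n) :
    n ^ (s + 1) / (n ^ (s + 1) - m ^ (s + 1)) ≤ n / ((s + 1) * (n - m)) + 1 := by
  have ha : 0 < s + 1 := by linarith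
  have hn : 0 < n := hm.trans_lt hmn
  have hD : 0 < n ^ (s + 1) - m ^ (s + 1) := sub_pos.2 (rpow_lt_rpow hm hmn ha)
  have hm_a : m ^ (s + 1) = m ^ s * m := by rw [rpow_add' hm ha.ne', rpow_one]
  have hn_a : n ^ (s + 1) = n ^ s * n := by rw [rpow_add' hn.le ha.ne', rpow_one]
  have hms : 0 ≤ m ^ s := rpow_nonneg hm s
  have tangent : (s + 1) * m ^ s * (n - m) ≤ n ^ (s + 1) - m ^ (s + 1) := by
    have := add_one_mul_mul_rpow_le hs hm hn.le
    rw [hm_a] at this ⊢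
    nlinarith
  have chord : n * (n ^ s - m ^ s) ≤ n ^ (s + 1) - m ^ (s + 1) := by
    rw [hm_a, hn_a]; nlinarith
  rw [div_add_one (by positivity), div_le_div_iff₀ hD (by positivity)]
  rw [hn_a] at tangent chord ⊢
  nlinarith [mul_le_mul_of_nonneg_left tangent hn.le,
    mul_le_mul_of_nonneg_left chord (by nlinarith : 0 ≤ (s + 1) * (n - m))]

theorem le_sum_Icc_rpow_div_sum_Icc_rpow {n r : ℕ} (hs : 0 ≤ s) (hr : 1 ≤ r) (hrn : r ≤ n) :
    (n : ℝ) / (s + 1) * (r : ℝ)⁻¹ ≤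
      (∑ j ∈ Icc 1 n, (j : ℝ) ^ s) / ∑ j ∈ Icc (n - r + 1) n, (j : ℝ) ^ s := by
  have ha : 0 < s + 1 := by linarith
  have hn : (0 : ℝ) < n := by exact_mod_cast hr.trans hrn
  have hF : (n : ℝ) ^ (s + 1) / (s + 1) ≤ ∑ j ∈ Icc 1 n, (j : ℝ) ^ s := by
    simpa [zero_rpow ha.ne'] using rpow_sub_rpow_le_sum_Icc hs (Nat.zero_le n)
  have hS : ∑ j ∈ Icc (n - r + 1) n, (j : ℝ) ^ s ≤ r * (n : ℝ) ^ s := by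
    simpa [Nat.sub_sub_self hrn] using sum_Icc_rpow_le_card_mul (m := n - r) (n := n) hs
  have hS_pos : 0 < ∑ j ∈ Icc (n - r + 1) n, (j : ℝ) ^ s :=
    sum_pos (fun j hj => rpow_pos_of_pos (Nat.cast_pos.2 (by grind)) s)
      (nonempty_Icc.2 (by omega))
  calc (n : ℝ) / (s + 1) * (r : ℝ)⁻¹
      = (n : ℝ) ^ (s + 1) / (s + 1) / (r * (n : ℝ) ^ s) := by
        rw [rpow_add_one hn.ne']; field_simp
    _ ≤ _ := div_le_div₀ (by positivity) hF hS_pos hS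

theorem sum_Icc_rpow_div_sum_Icc_rpow_le {n r : ℕ} (hs : 0 ≤ s) (hr : 1 ≤ r) (hrn : r ≤ n) :
    (∑ j ∈ Icc 1 n, (j : ℝ) ^ s) / ∑ j ∈ Icc (n - r + 1) n, (j : ℝ) ^ s ≤
      (n : ℝ) / (s + 1) * (r : ℝ)⁻¹ + (s + 3) := by
  have ha : 0 < s + 1 := by linarith
  have hn1 : (1 : ℝ) ≤ n := by exact_mod_cast hr.trans hrn
  have hr1 : (1 : ℝ) ≤ r := by exact_mod_cast hr
  have hgap : (n : ℝ) - ((n - r : ℕ) : ℝ) = r := by rw [Nat.cast_sub hrn, sub_sub_cancel]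
  have hmn : ((n - r : ℕ) : ℝ) < n := by linarith
  set D := (n : ℝ) ^ (s + 1) - ((n - r : ℕ) : ℝ) ^ (s + 1)
  have hD : 0 < D := sub_pos.2 (rpow_lt_rpow (Nat.cast_nonneg _) hmn ha)
  have hS : D / (s + 1) ≤ ∑ j ∈ Icc (n - r + 1) n, (j : ℝ) ^ s :=
    rpow_sub_rpow_le_sum_Icc hs (Nat.sub_le n r)
  have key := rpow_div_rpow_sub_rpow_le hs (Nat.cast_nonneg _) hmn
  rw [hgap] at key
  calc (∑ j ∈ Icc 1 n, (j : ℝ) ^ s) / ∑ j ∈ Icc (n - r + 1) n, (j : ℝ) ^ s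
      ≤ ((n : ℝ) ^ (s + 1) / (s + 1) + (n : ℝ) ^ s) / (D / (s + 1)) :=
        div_le_div₀ (by positivity) (sum_Icc_one_rpow_le hs n) (by positivity) hS
    _ = (1 + (s + 1) / n) * ((n : ℝ) ^ (s + 1) / D) := by
        rw [rpow_add_one (by positivity)]; field_simp
    _ ≤ (1 + (s + 1) / n) * ((n : ℝ) / ((s + 1) * r) + 1) := by gcongr
    _ = (n : ℝ) / (s + 1) * (r : ℝ)⁻¹ + ((r : ℝ)⁻¹ + 1 + (s + 1) / n) := by
        field_simp; ring
    _ ≤ _ := by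
        have : (r : ℝ)⁻¹ ≤ 1 := inv_le_one_of_one_le₀ hr1
        have : (s + 1) / n ≤ s + 1 := div_le_self ha.le hn1
        linarith

theorem sum_Icc_two_inv_eq_harmonic_sub_one {n : ℕ} (hn : 1 ≤ n) :
    ∑ r ∈ Icc 2 n, (r : ℝ)⁻¹ = harmonic n - 1 := by
  rw [harmonic_eq_sum_Icc, ← insert_Icc_add_one_left_eq_Icc hn, sum_insert (by simp)]
  push_cast
  ring

theorem sum_Icc_two_inv_le_log {n : ℕ} (hn : 1 ≤ n) :
    ∑ r ∈ Icc 2 n, (r : ℝ)⁻¹ ≤ log n := by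
  linarith [sum_Icc_two_inv_eq_harmonic_sub_one hn, harmonic_le_one_add_log n]

theorem log_sub_one_le_sum_Icc_two_inv {n : ℕ} (hn : 1 ≤ n) :
    log n - 1 ≤ ∑ r ∈ Icc 2 n, (r : ℝ)⁻¹ := by
  have : log n ≤ log ↑(n + 1) := log_le_log (by positivity) (by push_cast; linarith)
  linarith [sum_Icc_two_inv_eq_harmonic_sub_one hn, log_add_one_le_harmonic n]

/-- For power-law weights `w_i = (n−i+1)^s/f(n,s)`, the quantity
`E[T] = ∑_{r=2}^n f(n,s)/((n−r+1)^s + ⋯ + n^s)` satisfies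
`E[T] = n ln n/(s+1) + O(n)`. -/
theorem power_law_expected_T (s : ℝ) (hs : 0 < s) :
    ∃ C : ℝ, 0 < C ∧ ∀ n : ℕ, 2 ≤ n →
      |(∑ r ∈ Finset.Icc 2 n,
          (∑ j ∈ Finset.Icc 1 n, (j : ℝ) ^ s) /
            (∑ j ∈ Finset.Icc (n - r + 1) n, (j : ℝ) ^ s))
          - n * Real.log n / (s + 1)| ≤ C * n := by
  refine ⟨s + 3, by linarith, fun n hn => ?_⟩
  have hn1 : 1 ≤ n := by omega
  have hterm : ∀ r ∈ Icc 2 n, 1 ≤ r ∧ r ≤ n := fun r hr => by grind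
  have hn_div : (0 : ℝ) ≤ n / (s + 1) := by positivity
  have hH_le := mul_le_mul_of_nonneg_left (sum_Icc_two_inv_le_log hn1) hn_div
  have hH_ge := mul_le_mul_of_nonneg_left (log_sub_one_le_sum_Icc_two_inv hn1) hn_div
  set H := ∑ r ∈ Icc 2 n, (r : ℝ)⁻¹
  have lower : (n : ℝ) / (s + 1) * H ≤ ∑ r ∈ Icc 2 n,
      (∑ j ∈ Icc 1 n, (j : ℝ) ^ s) / ∑ j ∈ Icc (n - r + 1) n, (j : ℝ) ^ s := by
    rw [mul_sum]
    exact sum_le_sum fun r hr =>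
      le_sum_Icc_rpow_div_sum_Icc_rpow hs.le (hterm r hr).1 (hterm r hr).2
  have upper : ∑ r ∈ Icc 2 n,
      (∑ j ∈ Icc 1 n, (j : ℝ) ^ s) / ∑ j ∈ Icc (n - r + 1) n, (j : ℝ) ^ s ≤
        (n : ℝ) / (s + 1) * H + (n - 1) * (s + 3) := by
    refine (sum_le_sum fun r hr =>
      sum_Icc_rpow_div_sum_Icc_rpow_le hs.le (hterm r hr).1 (hterm r hr).2).trans (le_of_eq ?_)
    rw [sum_add_distrib, ← mul_sum, sum_const, Nat.card_Icc, nsmul_eq_mul,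
      Nat.cast_sub (by omega)]
    push_cast
    ring
  have hdiv : (n : ℝ) / (s + 1) ≤ n := div_le_self (by positivity) (by linarith)
  rw [abs_le, mul_div_right_comm]
  constructor <;> nlinarith
end

section
/- For 0 < s and n ≥ 2, the integral I = ∫_0^{1−1/n} dy/(1−y^{s+1}) satisfies I ≤ 1 + (1/(s+1))|ln(1 − (1−1/n)^{s+1})|, and for n ≥ (s+1)/2 this gives I ≤ ln n/(s+1) + 1. -/
/-!
Since `y ^ (s + 1) ≤ y ^ s` on `[0, 1]`, the integrand `1 / (1 - y ^ (s + 1)) = 1 + y ^ (s + 1) / (1 - y ^ (s + 1))`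
is at most `1 + y ^ s / (1 - y ^ (s + 1))`, and `y ^ s / (1 - y ^ (s + 1))` has the antiderivative
`-log (1 - y ^ (s + 1)) / (s + 1)`. For `x = 1 - 1/n` the logarithm is controlled by `1 - x ^ (s + 1) ≥ 1 - x = 1/n`.
-/

open Real intervalIntegral Set

section

variable {s x p : ℝ}

lemma one_sub_rpow_pos (hp : 0 < p) {y : ℝ} (hy₀ : 0 ≤ y) (hy₁ : y < 1) : 0 < 1 - y ^ p :=
  sub_pos.mpr (rpow_lt_one hy₀ hy₁ hp)

lemma continuousOn_div_one_sub_rpow {f : ℝ → ℝ} (hf : Continuous f) (hp : 0 < p) (hx₁ : x < 1) :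
    ContinuousOn (fun y ↦ f y / (1 - y ^ p)) (Icc 0 x) :=
  hf.continuousOn.div (continuous_const.sub (continuous_rpow_const hp.le)).continuousOn
    fun _ hy ↦ (one_sub_rpow_pos hp hy.1 (hy.2.trans_lt hx₁)).ne'

lemma hasDerivAt_neg_log_one_sub_rpow_div (hs : 0 ≤ s) {y : ℝ} (hy : y ^ (s + 1) ≠ 1) :
    HasDerivAt (fun y ↦ -log (1 - y ^ (s + 1)) / (s + 1)) (y ^ s / (1 - y ^ (s + 1))) y := by
  have hrpow : HasDerivAt (fun y ↦ y ^ (s + 1)) ((s + 1) * y ^ s) y := by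
    simpa using hasDerivAt_rpow_const (x := y) (p := s + 1) (Or.inr (by linarith))
  have hsub : 1 - y ^ (s + 1) ≠ 0 := sub_ne_zero.mpr (Ne.symm hy)
  refine (((hrpow.const_sub 1).log hsub).neg.div_const (s + 1)).congr_deriv ?_
  field_simp

lemma integral_rpow_div_one_sub_rpow (hs : 0 ≤ s) (hx₀ : 0 ≤ x) (hx₁ : x < 1) :
    ∫ y in (0 : ℝ)..x, y ^ s / (1 - y ^ (s + 1)) = -log (1 - x ^ (s + 1)) / (s + 1) := by
  have hs₁ : 0 < s + 1 := by linarith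
  rw [integral_eq_sub_of_hasDerivAt (fun y hy ↦ hasDerivAt_neg_log_one_sub_rpow_div hs ?_)
    ((continuousOn_div_one_sub_rpow (continuous_rpow_const hs) hs₁ hx₁).intervalIntegrable_of_Icc hx₀)]
  · simp [zero_rpow hs₁.ne']
  · rw [uIcc_of_le hx₀] at hy
    exact (rpow_lt_one hy.1 (hy.2.trans_lt hx₁) hs₁).ne

lemma one_div_one_sub_rpow_le (hs : 0 ≤ s) {y : ℝ} (hy₀ : 0 ≤ y) (hy₁ : y < 1) :
    1 / (1 - y ^ (s + 1)) ≤ 1 + y ^ s / (1 - y ^ (s + 1)) := by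
  have hpos := one_sub_rpow_pos (by linarith : 0 < s + 1) hy₀ hy₁
  have hle : y ^ (s + 1) ≤ y ^ s := rpow_le_rpow_of_exponent_ge' hy₀ hy₁.le hs (by linarith)
  rw [one_add_div hpos.ne']
  gcongr
  linarith

lemma integral_one_div_one_sub_rpow_le (hs : 0 ≤ s) (hx₀ : 0 ≤ x) (hx₁ : x < 1) :
    ∫ y in (0 : ℝ)..x, 1 / (1 - y ^ (s + 1)) ≤ x + -log (1 - x ^ (s + 1)) / (s + 1) := by
  have hs₁ : 0 < s + 1 := by linarith
  have hint : IntervalIntegrable (fun y ↦ y ^ s / (1 - y ^ (s + 1))) MeasureTheory.volume 0 x :=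
    (continuousOn_div_one_sub_rpow (continuous_rpow_const hs) hs₁ hx₁).intervalIntegrable_of_Icc hx₀
  calc ∫ y in (0 : ℝ)..x, 1 / (1 - y ^ (s + 1))
      ≤ ∫ y in (0 : ℝ)..x, (1 + y ^ s / (1 - y ^ (s + 1))) :=
        integral_mono_on hx₀
          ((continuousOn_div_one_sub_rpow continuous_const hs₁ hx₁).intervalIntegrable_of_Icc hx₀)
          (intervalIntegrable_const.add hint)
          fun y hy ↦ one_div_one_sub_rpow_le hs hy.1 (hy.2.trans_lt hx₁)
    _ = x + -log (1 - x ^ (s + 1)) / (s + 1) := by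
        rw [integral_add intervalIntegrable_const hint, integral_rpow_div_one_sub_rpow hs hx₀ hx₁]
        simp

lemma neg_log_one_sub_rpow_le (hp : 1 ≤ p) (hx₀ : 0 ≤ x) (hx₁ : x < 1) :
    -log (1 - x ^ p) ≤ -log (1 - x) := by
  have hxp : x ^ p ≤ x := rpow_le_self_of_le_one hx₀ hx₁.le hp
  exact neg_le_neg (log_le_log (by linarith) (by linarith))

end

/-- The integral `I = ∫_0^{1−1/n} dy/(1−y^{s+1})` satisfies
`I ≤ 1 + (1/(s+1))|ln(1 − (1−1/n)^{s+1})|`, and for `n ≥ (s+1)/2` this gives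
`I ≤ ln n/(s+1) + 1`. -/
theorem integral_bound (s : ℝ) (hs : 0 < s) (n : ℕ) (hn : 2 ≤ n) :
    ((∫ y in (0 : ℝ)..(1 - 1 / n), 1 / (1 - y ^ (s + 1)))
        ≤ 1 + (1 / (s + 1)) * |Real.log (1 - (1 - 1 / (n : ℝ)) ^ (s + 1))|) ∧
    ((s + 1) / 2 ≤ (n : ℝ) →
      (∫ y in (0 : ℝ)..(1 - 1 / n), 1 / (1 - y ^ (s + 1)))
        ≤ Real.log n / (s + 1) + 1) := by
  have hn₂ : (2 : ℝ) ≤ n := by exact_mod_cast hn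
  have hx₀ : 0 ≤ 1 - 1 / (n : ℝ) := by
    rw [sub_nonneg, div_le_one (by linarith)]; linarith
  have hx₁ : 1 - 1 / (n : ℝ) < 1 := by
    have : 0 < 1 / (n : ℝ) := by positivity
    linarith
  have hs₁ : 0 < s + 1 := by linarith
  have hlog : |log (1 - (1 - 1 / (n : ℝ)) ^ (s + 1))| = -log (1 - (1 - 1 / (n : ℝ)) ^ (s + 1)) :=
    abs_of_nonpos <| log_nonpos (one_sub_rpow_pos hs₁ hx₀ hx₁).le
      (sub_le_self _ (rpow_nonneg hx₀ _))
  have hI := integral_one_div_one_sub_rpow_le hs.le hx₀ hx₁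
  have hbound : (∫ y in (0 : ℝ)..(1 - 1 / n), 1 / (1 - y ^ (s + 1)))
      ≤ 1 + (1 / (s + 1)) * |log (1 - (1 - 1 / (n : ℝ)) ^ (s + 1))| := by
    rw [hlog, one_div_mul_eq_div]
    linarith
  refine ⟨hbound, fun _ ↦ ?_⟩
  have hlog_n : -log (1 - (1 - 1 / (n : ℝ)) ^ (s + 1)) ≤ log n := by
    simpa using neg_log_one_sub_rpow_le (by linarith : (1 : ℝ) ≤ s + 1) hx₀ hx₁
  rw [hlog, one_div_mul_eq_div] at hbound
  linarith [div_le_div_of_nonneg_right hlog_n hs₁.le]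
end

section
/- Under the monotone transition rule φ(z,i) = move_i(z) for the move-to-front chain on S_n with the weak Bruhat order: if z ≤ z' in the weak Bruhat order, then move_i(z) ≤ move_i(z') for every record i ∈ {1,...,n}. -/
/-- The inversion set of a list order `z : Equiv.Perm (Fin n)` (where `z r` is the record
in position `r`): pairs of records `a < b` with `b` appearing before `a` in the list. -/
def inversions {n : ℕ} (z : Equiv.Perm (Fin n)) : Set (Fin n × Fin n) :=
  {p | p.1 < p.2 ∧ z.symm p.2 < z.symm p.1}

/-- The weak Bruhat order on `S_n`: `z ≤ z'` iff the inversion set of `z` is contained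
in the inversion set of `z'`. -/
def weakBruhatLE {n : ℕ} (z z' : Equiv.Perm (Fin n)) : Prop :=
  inversions z ⊆ inversions z'

/-- Move record `i` to the front of the list `z`, keeping the relative order of
the other records. -/
def moveToFront {n : ℕ} (z : Equiv.Perm (Fin n)) (i : Fin n) : Equiv.Perm (Fin n) :=
  z * (Fin.cycleRange (z.symm i))⁻¹

lemma cycleRange_lt_iff {m : ℕ} (k p q : Fin (m + 1)) (hpq : p ≠ q) :
    Fin.cycleRange k q < Fin.cycleRange k p ↔ q = k ∨ (p ≠ k ∧ q < p) := by
  have hk : k.val ≤ m := Nat.lt_succ_iff.mp k.isLt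
  have hpq' : p.val ≠ q.val := fun hc => hpq (Fin.ext hc)
  rcases lt_trichotomy p k with hp | hp | hp <;>
    rcases lt_trichotomy q k with hq | hq | hq <;>
    [skip; skip; skip; skip; exact absurd (hp.trans hq.symm) hpq; skip; skip; skip; skip] <;>
    first
      | (have hp' : p.val < k.val := hp
         have hcp : (Fin.cycleRange k p).val = p.val + 1 := Fin.coe_cycleRange_of_lt hp) <;> skip
      | (have hp' : p.val = k.val := congrArg Fin.val hp
         have hcp : (Fin.cycleRange k p).val = 0 := by rw [hp, Fin.cycleRange_self]; rfl) <;> skip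
      | (have hp' : k.val < p.val := hp
         have hcp : (Fin.cycleRange k p).val = p.val := congrArg Fin.val (Fin.cycleRange_of_gt hp))
  all_goals
    first
      | (have hq' : q.val < k.val := hq
         have hcq : (Fin.cycleRange k q).val = q.val + 1 := Fin.coe_cycleRange_of_lt hq)
      | (have hq' : q.val = k.val := congrArg Fin.val hq
         have hcq : (Fin.cycleRange k q).val = 0 := by rw [hq, Fin.cycleRange_self]; rfl)
      | (have hq' : k.val < q.val := hq
         have hcq : (Fin.cycleRange k q).val = q.val := congrArg Fin.val (Fin.cycleRange_of_gt hq))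
  all_goals
    simp only [Fin.lt_def, Fin.ext_iff, ne_eq, hcp, hcq]
    omega

lemma moveToFront_symm_apply {n : ℕ} (z : Equiv.Perm (Fin n)) (i a : Fin n) :
    (moveToFront z i).symm a = Fin.cycleRange (z.symm i) (z.symm a) := by
  simp [moveToFront, Equiv.Perm.inv_def, Equiv.Perm.mul_def, Equiv.symm_trans_apply]

/-- Monotonicity of the move-to-front transition rule with respect to the weak Bruhat
order: if `z ≤ z'` then `move_i(z) ≤ move_i(z')` for every record `i`. -/
theorem moveToFront_monotone {n : ℕ} (z z' : Equiv.Perm (Fin n))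
    (h : weakBruhatLE z z') (i : Fin n) :
    weakBruhatLE (moveToFront z i) (moveToFront z' i) := by
  match n with
  | 0 => exact i.elim0
  | m + 1 =>
    rintro ⟨a, b⟩ ⟨hab, hinv⟩
    refine ⟨hab, ?_⟩
    rw [moveToFront_symm_apply, moveToFront_symm_apply] at hinv ⊢
    have hab' : z.symm a ≠ z.symm b := fun hc => hab.ne (z.symm.injective hc)
    have hab'' : z'.symm a ≠ z'.symm b := fun hc => hab.ne (z'.symm.injective hc)
    rw [cycleRange_lt_iff _ _ _ hab'] at hinv
    rw [cycleRange_lt_iff _ _ _ hab'']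
    rcases hinv with hbi | ⟨hai, hlt⟩
    · left
      rw [z.symm.injective.eq_iff] at hbi
      rw [hbi]
    · rcases eq_or_ne b i with rfl | hbi
      · left; rfl
      · right
        refine ⟨fun hc => hai (congrArg z.symm (z'.symm.injective hc ▸ rfl : a = i)), ?_⟩
        exact (h ⟨hab, hlt⟩).2
end
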